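/- In the discrimination setting, fix δ ∈ (0,1) and let p̂(δ) := δ·(1/√(1+3δ²) − 1/2). Then welfare and inequality are both strictly decreasing in the advisor's partiality on [0, p̂(δ)]: for all 0 ≤ p < p' ≤ p̂(δ), W(p', δ) < W(p, δ) and I(p', δ) < I(p, δ). -/

import Mathlib

noncomputable section

/-! Discrimination setting (Section 5.2 of the paper): `K = 2`, prior means `0`,
prior variances `Σ⁰₁ = Σ⁰₂ = 1`, budget `T = 1`.  For discrimination level
`δ ∈ (0,1)` the politician's weights are `((1+δ)/2, (1−δ)/2)`; for partiality
level `p ∈ [0,1)` the advisor's weights are `((1−p)/2, (1+p)/2)`.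

* `ah1 p δ, ah2 p δ` are the auxiliary weights `α̂₁(p,δ), α̂₂(p,δ)`.
* `tau2aux p δ` is `τ₂^aux(p,δ)` and `tau2star p δ = min{τ₂^aux(p,δ), 1}` is the
  advisor's equilibrium allocation of tests to group 2 (group 1 gets the rest).
* `omega τ₂ δ` is utilitarian welfare as a function of the allocation, and
  `W p δ = ω(τ₂*(p,δ), δ)` is equilibrium welfare.
* `Dlt τ₂ δ` is the difference of the two groups' ex ante expected utilities and
  `Ineq p δ = |Δ(τ₂*(p,δ), δ)|` is equilibrium inequality. -/

/-- Auxiliary weight `α̂₁(p,δ)`. -/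
def ah1 (p δ : ℝ) : ℝ :=
  if p < (1 - δ) / 2 then (1 / 2) * Real.sqrt ((1 + δ) * (1 - 2 * p - δ)) else 0

/-- Auxiliary weight `α̂₂(p,δ)`. -/
def ah2 (p δ : ℝ) : ℝ := (1 / 2) * Real.sqrt ((1 - δ) * (1 + 2 * p + δ))

/-- `τ₂^aux(p,δ)`. -/
def tau2aux (p δ : ℝ) : ℝ := (2 * ah2 p δ - ah1 p δ) / (ah1 p δ + ah2 p δ)

/-- The advisor's equilibrium allocation of tests to group 2, `τ₂*(p,δ)`. -/
def tau2star (p δ : ℝ) : ℝ := min (tau2aux p δ) 1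

/-- Utilitarian welfare `ω(τ₂, δ)` from splitting the budget as `(1−τ₂, τ₂)`. -/
def omega (τ2 δ : ℝ) : ℝ :=
  -3 - δ ^ 2 + ((1 + δ) ^ 2 / 2 + (1 + δ) * (1 - τ2)) / (2 - τ2)
    + ((1 - δ) ^ 2 / 2 + (1 - δ) * τ2) / (1 + τ2)

/-- Equilibrium welfare `W(p,δ)`. -/
def W (p δ : ℝ) : ℝ := omega (tau2star p δ) δ

/-- Difference `Δ(τ₂,δ)` of the two groups' ex ante expected utilities. -/
def Dlt (τ2 δ : ℝ) : ℝ :=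
  (1 + δ) * (1 - τ2) / (2 - τ2) - (1 - δ) * τ2 / (1 + τ2)

/-- Equilibrium inequality `I(p,δ)`. -/
def Ineq (p δ : ℝ) : ℝ := |Dlt (tau2star p δ) δ|

/-! Write `s = δ + 2p` and `r = √(1 - δ²)`. For `s ≥ 0` the condition `p ≤ p̂(δ)` reads
`(1 + 3δ²) s² ≤ 4δ²`. Under it `α̂₂ ≤ 2 α̂₁`, so `τ₂* = τ₂^aux` is interior, and substituting
`α̂₁² = (1+δ)(1-s)/4`, `α̂₂² = (1-δ)(1+s)/4` gives the closed forms
`W = -(4 + 2δ²)/3 - (r/3) (1 - δs)/√(1 - s²)` and `I = 4δ/3 - (2r/3) s/√(1 - s²)`;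
the condition `(1 + 3δ²) s² ≤ 4δ²` is precisely `Δ ≥ 0`, so `p̂` is where inequality vanishes.
Both `s/√(1 - s²)` and, for `s ≥ δ`, `(1 - δs)/√(1 - s²)` are strictly increasing in `s < 1`. -/

open Real

section Closed

variable {δ s A B : ℝ}

lemma omega_two_mul_sub_div_add (hA : 0 < A) (hB : 0 < B)
    (hA2 : A ^ 2 = (1 + δ) * (1 - s)) (hB2 : B ^ 2 = (1 - δ) * (1 + s)) :
    omega ((2 * B - A) / (A + B)) δ
      = (-4 - 2 * δ ^ 2) / 3 - (1 - δ ^ 2) * (1 - δ * s) / (3 * (A * B)) := by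
  have h2 : 2 - (2 * B - A) / (A + B) = 3 * A / (A + B) := by field_simp; ring
  have h1 : 1 + (2 * B - A) / (A + B) = 3 * B / (A + B) := by field_simp; ring
  rw [omega, h2, h1]
  field_simp
  linear_combination (-(1 - δ ^ 2)) * (hA2 + hB2)

lemma Dlt_two_mul_sub_div_add (hA : 0 < A) (hB : 0 < B)
    (hA2 : A ^ 2 = (1 + δ) * (1 - s)) (hB2 : B ^ 2 = (1 - δ) * (1 + s)) :
    Dlt ((2 * B - A) / (A + B)) δ = 4 * δ / 3 - 2 * (1 - δ ^ 2) * s / (3 * (A * B)) := by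
  have h2 : 2 - (2 * B - A) / (A + B) = 3 * A / (A + B) := by field_simp; ring
  have h1 : 1 + (2 * B - A) / (A + B) = 3 * B / (A + B) := by field_simp; ring
  rw [Dlt, h2, h1]
  field_simp
  linear_combination (1 - δ) * hA2 - (1 + δ) * hB2

end Closed

section Monotone

variable {δ s s' : ℝ}

lemma div_sqrt_one_sub_sq_lt (hs : 0 ≤ s) (hss' : s < s') (hs' : s' < 1) :
    s / √(1 - s ^ 2) < s' / √(1 - s' ^ 2) := by
  have hq' : 0 < √(1 - s' ^ 2) := sqrt_pos.2 (by nlinarith)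
  calc s / √(1 - s ^ 2) ≤ s / √(1 - s' ^ 2) := by gcongr
    _ < s' / √(1 - s' ^ 2) := by gcongr

lemma one_sub_mul_div_sqrt_one_sub_sq_lt (hδ : 0 ≤ δ) (hδs : δ ≤ s) (hss' : s < s')
    (hs' : s' < 1) :
    (1 - δ * s) / √(1 - s ^ 2) < (1 - δ * s') / √(1 - s' ^ 2) := by
  have hq : 0 < 1 - s ^ 2 := by nlinarith
  have hq' : 0 < 1 - s' ^ 2 := by nlinarith
  have hds : 0 < 1 - δ * s := by nlinarith
  have hds' : 0 ≤ 1 - δ * s' := by nlinarith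
  rw [div_lt_div_iff₀ (sqrt_pos.2 hq) (sqrt_pos.2 hq'),
    ← sqrt_sq hds.le, ← sqrt_sq hds', ← sqrt_mul (sq_nonneg _), ← sqrt_mul (sq_nonneg _)]
  refine sqrt_lt_sqrt (by positivity) ?_
  -- the difference is `(s' - s) * ((s - δ) * (1 - δ * s') + (s' - δ) * (1 - δ * s))`
  nlinarith [mul_nonneg (sub_nonneg.2 hδs) hds', mul_pos (sub_pos.2 (hδs.trans_lt hss')) hds]

end Monotone

section Equilibrium

variable {δ s p : ℝ}

lemma mul_sq_le_of_le_phat (hs : 0 ≤ δ + 2 * p)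
    (hp : p ≤ δ * (1 / √(1 + 3 * δ ^ 2) - 1 / 2)) :
    (1 + 3 * δ ^ 2) * (δ + 2 * p) ^ 2 ≤ 4 * δ ^ 2 := by
  have ht : 0 < √(1 + 3 * δ ^ 2) := sqrt_pos.2 (by positivity)
  have h : (δ + 2 * p) * √(1 + 3 * δ ^ 2) ≤ 2 * δ := by
    have := mul_le_mul_of_nonneg_right hp ht.le
    field_simp at this
    linarith
  calc (1 + 3 * δ ^ 2) * (δ + 2 * p) ^ 2 = ((δ + 2 * p) * √(1 + 3 * δ ^ 2)) ^ 2 := by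
        rw [mul_pow, sq_sqrt (by positivity)]; ring
    _ ≤ (2 * δ) ^ 2 := by gcongr
    _ = 4 * δ ^ 2 := by ring

lemma sq_lt_one_of_mul_sq_le (hδ0 : 0 ≤ δ) (hδ1 : δ < 1)
    (h : (1 + 3 * δ ^ 2) * s ^ 2 ≤ 4 * δ ^ 2) : s ^ 2 < 1 := by
  nlinarith

-- `α̂₂ ≤ 2 α̂₁` after squaring, i.e. `τ₂^aux ≤ 1`
lemma weight_le_of_mul_sq_le (hδ0 : 0 ≤ δ) (hδ1 : δ < 1)
    (h : (1 + 3 * δ ^ 2) * s ^ 2 ≤ 4 * δ ^ 2) :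
    (1 - δ) * (1 + s) ≤ 4 * ((1 + δ) * (1 - s)) := by
  have key : (1 + 3 * δ ^ 2) * (s * (5 + 3 * δ)) ^ 2 ≤ (1 + 3 * δ ^ 2) * (3 + 5 * δ) ^ 2 := by
    nlinarith [mul_le_mul_of_nonneg_right h (sq_nonneg (5 + 3 * δ)),
      show 0 ≤ 3 * (1 - δ) ^ 2 * (1 + δ) * (13 * δ + 3) by positivity]
  have := abs_le_of_sq_le_sq' (le_of_mul_le_mul_left key (by positivity)) (by positivity)
  nlinarith

lemma exists_tau2star_eq (hδ0 : 0 ≤ δ) (hδ1 : δ < 1)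
    (h : (1 + 3 * δ ^ 2) * (δ + 2 * p) ^ 2 ≤ 4 * δ ^ 2) :
    ∃ A B : ℝ, 0 < A ∧ 0 < B ∧ A ^ 2 = (1 + δ) * (1 - (δ + 2 * p)) ∧
      B ^ 2 = (1 - δ) * (1 + (δ + 2 * p)) ∧
      A * B = √(1 - δ ^ 2) * √(1 - (δ + 2 * p) ^ 2) ∧
      tau2star p δ = (2 * B - A) / (A + B) := by
  have hs := sq_lt_one_of_mul_sq_le hδ0 hδ1 h
  have hs1 : δ + 2 * p < 1 := by nlinarith
  have ha : 0 < (1 + δ) * (1 - 2 * p - δ) := by nlinarith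
  have hb : 0 < (1 - δ) * (1 + 2 * p + δ) := by nlinarith
  set A := √((1 + δ) * (1 - 2 * p - δ)) with hA
  set B := √((1 - δ) * (1 + 2 * p + δ)) with hB
  have hA0 : 0 < A := sqrt_pos.2 ha
  have hB0 : 0 < B := sqrt_pos.2 hb
  have hA2 : A ^ 2 = (1 + δ) * (1 - (δ + 2 * p)) := by rw [sq_sqrt ha.le]; ring
  have hB2 : B ^ 2 = (1 - δ) * (1 + (δ + 2 * p)) := by rw [sq_sqrt hb.le]; ring
  refine ⟨A, B, hA0, hB0, hA2, hB2, ?_, ?_⟩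
  · rw [← sqrt_mul ha.le, ← sqrt_mul (by nlinarith)]
    ring_nf
  · have hBA : B ≤ 2 * A := by nlinarith [weight_le_of_mul_sq_le hδ0 hδ1 h]
    have htau : tau2aux p δ = (2 * B - A) / (A + B) := by
      rw [tau2aux, ah1, ah2, if_pos (by linarith), ← hA, ← hB]
      field_simp
    rw [tau2star, htau, min_eq_left ((div_le_one (by positivity)).2 (by linarith))]

lemma W_eq (hδ0 : 0 ≤ δ) (hδ1 : δ < 1) (h : (1 + 3 * δ ^ 2) * (δ + 2 * p) ^ 2 ≤ 4 * δ ^ 2) :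
    W p δ = (-4 - 2 * δ ^ 2) / 3
      - √(1 - δ ^ 2) / 3 * ((1 - δ * (δ + 2 * p)) / √(1 - (δ + 2 * p) ^ 2)) := by
  obtain ⟨A, B, hA, hB, hA2, hB2, hAB, htau⟩ := exists_tau2star_eq hδ0 hδ1 h
  have hr : 0 < √(1 - δ ^ 2) := sqrt_pos.2 (by nlinarith)
  have hq : 0 < √(1 - (δ + 2 * p) ^ 2) :=
    sqrt_pos.2 (by linarith [sq_lt_one_of_mul_sq_le hδ0 hδ1 h])
  rw [W, htau, omega_two_mul_sub_div_add hA hB hA2 hB2, hAB]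
  field_simp
  linear_combination (1 - δ * (δ + 2 * p)) * sq_sqrt (show 0 ≤ 1 - δ ^ 2 by nlinarith)

lemma Ineq_eq (hδ0 : 0 ≤ δ) (hδ1 : δ < 1) (h : (1 + 3 * δ ^ 2) * (δ + 2 * p) ^ 2 ≤ 4 * δ ^ 2) :
    Ineq p δ = 4 * δ / 3
      - 2 * √(1 - δ ^ 2) / 3 * ((δ + 2 * p) / √(1 - (δ + 2 * p) ^ 2)) := by
  obtain ⟨A, B, hA, hB, hA2, hB2, hAB, htau⟩ := exists_tau2star_eq hδ0 hδ1 h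
  have hq' : 0 < 1 - (δ + 2 * p) ^ 2 := by linarith [sq_lt_one_of_mul_sq_le hδ0 hδ1 h]
  have hr : 0 < √(1 - δ ^ 2) := sqrt_pos.2 (by nlinarith)
  have hq : 0 < √(1 - (δ + 2 * p) ^ 2) := sqrt_pos.2 hq'
  have hr2 : √(1 - δ ^ 2) ^ 2 = 1 - δ ^ 2 := sq_sqrt (by nlinarith)
  have hq2 : √(1 - (δ + 2 * p) ^ 2) ^ 2 = 1 - (δ + 2 * p) ^ 2 := sq_sqrt hq'.le
  have hDlt : 2 * (1 - δ ^ 2) * (δ + 2 * p) / (3 * (A * B))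
      = 2 * √(1 - δ ^ 2) / 3 * ((δ + 2 * p) / √(1 - (δ + 2 * p) ^ 2)) := by
    rw [hAB]
    field_simp
    linear_combination (-(δ + 2 * p)) * hr2
  have hnonneg : √(1 - δ ^ 2) * (δ + 2 * p) ≤ 2 * δ * √(1 - (δ + 2 * p) ^ 2) := by
    refine (abs_le_of_sq_le_sq' ?_ (by positivity)).2
    rw [mul_pow, mul_pow, hr2, hq2]
    linarith
  rw [Ineq, htau, Dlt_two_mul_sub_div_add hA hB hA2 hB2, hDlt, abs_of_nonneg]
  rw [sub_nonneg, div_mul_div_comm, div_le_div_iff₀ (by positivity) (by positivity)]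
  nlinarith

end Equilibrium

/-- Part of Proposition 4 (the welfare–inequality Pareto frontier):
welfare and inequality are both strictly decreasing in the advisor's partiality
on `[0, p̂(δ)]`. -/
theorem stmt_14 (δ : ℝ) (hδ : δ ∈ Set.Ioo (0 : ℝ) 1) :
    let phat : ℝ := δ * (1 / Real.sqrt (1 + 3 * δ ^ 2) - 1 / 2)
    ∀ p p' : ℝ, 0 ≤ p → p < p' → p' ≤ phat →
      W p' δ < W p δ ∧ Ineq p' δ < Ineq p δ := by
  obtain ⟨hδ0, hδ1⟩ := hδ
  intro phat p p' hp hpp' hp'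
  have h := mul_sq_le_of_le_phat (by linarith) (hpp'.le.trans hp')
  have h' := mul_sq_le_of_le_phat (by linarith) hp'
  have hs : δ + 2 * p < δ + 2 * p' := by linarith
  have hs' : δ + 2 * p' < 1 := by nlinarith [sq_lt_one_of_mul_sq_le hδ0.le hδ1 h']
  have hr : 0 < √(1 - δ ^ 2) := sqrt_pos.2 (by nlinarith)
  rw [W_eq hδ0.le hδ1 h, W_eq hδ0.le hδ1 h', Ineq_eq hδ0.le hδ1 h, Ineq_eq hδ0.le hδ1 h']
  constructor
  · have := one_sub_mul_div_sqrt_one_sub_sq_lt hδ0.le (by linarith) hs hs'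
    gcongr
  · have := div_sqrt_one_sub_sq_lt (by linarith) hs hs'
    gcongr
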